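/- In the setting of the factorization C = S R_U D R_Vᵀ Tᵀ (A = SΣTᵀ of rank ρ, ‖A‖ = 1, C = A + UVᵀ, D = diag(σ_1,…,σ_ρ,1,…,1)), suppose the r×r blocks U_r and V_r are invertible. Then C is invertible and σ_ρ(A)/σ_n(C) ≤ ‖R_U⁻¹‖·‖R_V⁻¹‖ ≤ (1+‖U‖)(1+‖V‖)·max{1,‖U_r⁻¹‖}·max{1,‖V_r⁻¹‖}, where σ_n(C) = 1/‖C⁻¹‖. -/

import Mathlib

/-!
Since `S` and `T` are orthogonal, `C = S (R_U D R_Vᵀ) Tᵀ` gives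
`‖C⁻¹‖ = ‖(R_U D R_Vᵀ)⁻¹‖ ≤ ‖R_U⁻¹‖ ‖D⁻¹‖ ‖R_V⁻¹‖`, and `‖D⁻¹‖ = 1 / σ_ρ` because
`σ_ρ ≤ σ_1 ≤ ‖A‖ = 1`. For the second bound, `R_U⁻¹` is the shear `[[I, -Ū], [0, I]]` times
`diag(I, U_r⁻¹)`, whose norms are at most `1 + ‖Ū‖ ≤ 1 + ‖U‖` and `max 1 ‖U_r⁻¹‖`.
-/

open Matrix
open scoped Matrix.Norms.L2Operator

namespace Matrix

variable {𝕜 m n p q : Type*} [RCLike 𝕜] [Fintype m] [Fintype n] [Fintype p] [Fintype q]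

lemma l2_opNorm_one_le [DecidableEq n] : ‖(1 : Matrix n n 𝕜)‖ ≤ 1 := by
  rw [← diagonal_one, l2_opNorm_diagonal]
  exact (pi_norm_le_iff_of_nonneg zero_le_one).2 fun _ => by simp

lemma l2_opNorm_le_one_of_conjTranspose_mul_self_eq_one [DecidableEq n] {M : Matrix m n 𝕜}
    (h : Mᴴ * M = 1) : ‖M‖ ≤ 1 := by
  have hM := l2_opNorm_conjTranspose_mul_self M
  rw [h] at hM
  nlinarith [l2_opNorm_one_le (𝕜 := 𝕜) (n := n), norm_nonneg M]

lemma l2_opNorm_le_l2_opNorm_fromRows_left [DecidableEq m] [DecidableEq n] [DecidableEq p]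
    (A : Matrix m p 𝕜) (B : Matrix n p 𝕜) : ‖A‖ ≤ ‖fromRows A B‖ := by
  have hproj : ‖(fromCols 1 0 : Matrix m (m ⊕ n) 𝕜)‖ ≤ 1 := by
    have hcols : (fromCols 1 0 : Matrix m (m ⊕ n) 𝕜) = (fromRows 1 0)ᴴ := by
      simp [conjTranspose_fromRows_eq_fromCols_conjTranspose]
    rw [hcols, l2_opNorm_conjTranspose]
    refine l2_opNorm_le_one_of_conjTranspose_mul_self_eq_one ?_
    simp [conjTranspose_fromRows_eq_fromCols_conjTranspose, fromCols_mul_fromRows]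
  calc ‖A‖ = ‖(fromCols 1 0 : Matrix m (m ⊕ n) 𝕜) * fromRows A B‖ := by
        rw [fromCols_mul_fromRows]; simp
    _ ≤ ‖(fromCols 1 0 : Matrix m (m ⊕ n) 𝕜)‖ * ‖fromRows A B‖ := l2_opNorm_mul _ _
    _ ≤ ‖fromRows A B‖ := mul_le_of_le_one_left (norm_nonneg _) hproj

lemma l2_opNorm_fromBlocks_zero_zero_le [DecidableEq p] [DecidableEq q]
    (X : Matrix m p 𝕜) (Y : Matrix n q 𝕜) :
    ‖fromBlocks X 0 0 Y‖ ≤ max ‖X‖ ‖Y‖ := by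
  rw [l2_opNorm_def]
  refine ContinuousLinearMap.opNorm_le_bound _ (by positivity) fun x => ?_
  change ‖(EuclideanSpace.equiv _ 𝕜).symm (fromBlocks X 0 0 Y *ᵥ x)‖ ≤ _
  set x₁ : EuclideanSpace 𝕜 p := WithLp.toLp 2 (fun i => x (Sum.inl i))
  set x₂ : EuclideanSpace 𝕜 q := WithLp.toLp 2 (fun i => x (Sum.inr i))
  have hx : ‖x‖ ^ 2 = ‖x₁‖ ^ 2 + ‖x₂‖ ^ 2 := by
    simp [x₁, x₂, EuclideanSpace.norm_sq_eq, Fintype.sum_sum_type]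
  have hMx : ‖(EuclideanSpace.equiv _ 𝕜).symm (fromBlocks X 0 0 Y *ᵥ x)‖ ^ 2 =
      ‖(EuclideanSpace.equiv m 𝕜).symm (X *ᵥ x₁)‖ ^ 2 +
        ‖(EuclideanSpace.equiv n 𝕜).symm (Y *ᵥ x₂)‖ ^ 2 := by
    simp [x₁, x₂, EuclideanSpace.norm_sq_eq, Fintype.sum_sum_type, fromBlocks_mulVec]
    rfl
  have h₁ := (l2_opNorm_mulVec X x₁).trans
    (mul_le_mul_of_nonneg_right (le_max_left ‖X‖ ‖Y‖) (norm_nonneg _))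
  have h₂ := (l2_opNorm_mulVec Y x₂).trans
    (mul_le_mul_of_nonneg_right (le_max_right ‖X‖ ‖Y‖) (norm_nonneg _))
  refine (sq_le_sq₀ (by positivity) (by positivity)).mp ?_
  rw [hMx, mul_pow, hx, mul_add, ← mul_pow, ← mul_pow]
  gcongr

lemma l2_opNorm_fromBlocks_upperRight_le [DecidableEq p] [DecidableEq q] (B : Matrix m q 𝕜) :
    ‖fromBlocks (0 : Matrix m p 𝕜) B (0 : Matrix n p 𝕜) (0 : Matrix n q 𝕜)‖ ≤ ‖B‖ := by
  -- `Mᴴ M = diag(0, Bᴴ B)`, so the C⋆-identity reduces this to the block-diagonal case.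
  set M := fromBlocks (0 : Matrix m p 𝕜) B (0 : Matrix n p 𝕜) (0 : Matrix n q 𝕜)
  have hMM : Mᴴ * M = fromBlocks 0 0 0 (Bᴴ * B) := by
    simp [M, fromBlocks_conjTranspose, fromBlocks_multiply]
  have h := l2_opNorm_fromBlocks_zero_zero_le (0 : Matrix p p 𝕜) (Bᴴ * B)
  rw [← hMM, norm_zero, max_eq_right (norm_nonneg _), l2_opNorm_conjTranspose_mul_self,
    l2_opNorm_conjTranspose_mul_self] at h
  exact (mul_self_le_mul_self_iff (norm_nonneg _) (norm_nonneg _)).2 h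

lemma l2_opNorm_inv_fromBlocks_one_le [DecidableEq m] [DecidableEq n] {B : Matrix m n 𝕜}
    {Y : Matrix n n 𝕜} (hY : IsUnit Y) :
    ‖(fromBlocks (1 : Matrix m m 𝕜) B 0 Y)⁻¹‖ ≤ (1 + ‖B‖) * max 1 ‖Y⁻¹‖ := by
  have hfactor : (fromBlocks 1 B 0 Y)⁻¹ =
      (1 + fromBlocks 0 (-B) 0 0 : Matrix (m ⊕ n) (m ⊕ n) 𝕜) * fromBlocks 1 0 0 Y⁻¹ := by
    rw [inv_fromBlocks_zero₂₁_of_isUnit_iff _ _ _ (iff_of_true isUnit_one hY), ← fromBlocks_one,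
      fromBlocks_add, fromBlocks_multiply]
    simp
  have hshear : ‖(1 + fromBlocks 0 (-B) 0 0 : Matrix (m ⊕ n) (m ⊕ n) 𝕜)‖ ≤ 1 + ‖B‖ :=
    (norm_add_le _ _).trans <| add_le_add l2_opNorm_one_le <| by
      simpa using l2_opNorm_fromBlocks_upperRight_le (p := m) (n := n) (-B)
  have hscale : ‖(fromBlocks 1 0 0 Y⁻¹ : Matrix (m ⊕ n) (m ⊕ n) 𝕜)‖ ≤ max 1 ‖Y⁻¹‖ :=
    (l2_opNorm_fromBlocks_zero_zero_le _ _).trans (max_le_max_right _ l2_opNorm_one_le)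
  rw [hfactor]
  exact (l2_opNorm_mul _ _).trans (by gcongr)

lemma l2_opNorm_transpose [DecidableEq m] [DecidableEq n] (M : Matrix m n ℝ) : ‖Mᵀ‖ = ‖M‖ := by
  simpa using l2_opNorm_conjTranspose M

lemma l2_opNorm_inv_diagonal_le [DecidableEq n] {d : n → ℝ} {s : ℝ} (hs : 0 < s)
    (hd : ∀ i, s ≤ d i) : ‖(diagonal d)⁻¹‖ ≤ s⁻¹ := by
  have hinv : (diagonal d)⁻¹ = diagonal d⁻¹ := by
    refine inv_eq_left_inv ?_
    rw [diagonal_mul_diagonal, ← diagonal_one]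
    exact congrArg diagonal (funext fun i => inv_mul_cancel₀ (hs.trans_le (hd i)).ne')
  rw [hinv, l2_opNorm_diagonal]
  refine (pi_norm_le_iff_of_nonneg (inv_nonneg.2 hs.le)).2 fun i => ?_
  rw [Pi.inv_apply, norm_inv, Real.norm_of_nonneg (hs.le.trans (hd i))]
  exact inv_anti₀ hs (hd i)

lemma l2_opNorm_inv_mul_mul_transpose_le [DecidableEq n] (P M Q : Matrix n n ℝ) :
    ‖(P * M * Qᵀ)⁻¹‖ ≤ ‖P⁻¹‖ * ‖M⁻¹‖ * ‖Q⁻¹‖ := by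
  rw [mul_inv_rev, mul_inv_rev, ← transpose_nonsing_inv]
  calc ‖Q⁻¹ᵀ * (M⁻¹ * P⁻¹)‖ ≤ ‖Q⁻¹ᵀ‖ * (‖M⁻¹‖ * ‖P⁻¹‖) :=
        (l2_opNorm_mul _ _).trans (by gcongr; exact l2_opNorm_mul _ _)
    _ = ‖P⁻¹‖ * ‖M⁻¹‖ * ‖Q⁻¹‖ := by rw [l2_opNorm_transpose]; ring

lemma norm_le_l2_opNorm_mul_diagonal_mul_transpose [DecidableEq n] {S T : Matrix n n ℝ}
    (hS : Sᵀ * S = 1) (hT : Tᵀ * T = 1) (d : n → ℝ) (i : n) :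
    ‖d i‖ ≤ ‖S * diagonal d * Tᵀ‖ := by
  have hSo : Sᵀ ∈ orthogonalGroup n ℝ :=
    (mem_orthogonalGroup_iff n ℝ).2 (by rwa [transpose_transpose])
  have hTo : T ∈ orthogonalGroup n ℝ := (mem_orthogonalGroup_iff' n ℝ).2 hT
  calc ‖d i‖ ≤ ‖diagonal d‖ := (norm_le_pi_norm d i).trans_eq (l2_opNorm_diagonal d).symm
    _ = ‖Sᵀ * (S * diagonal d * Tᵀ) * T‖ := by
      simp only [← Matrix.mul_assoc, hS, Matrix.one_mul]
      rw [Matrix.mul_assoc, hT, Matrix.mul_one]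
    _ = ‖S * diagonal d * Tᵀ‖ := by
      rw [CStarRing.norm_mul_mem_unitary _ hTo, CStarRing.norm_mem_unitary_mul _ hSo]

lemma le_l2_opNorm_mul_fromBlocks_diagonal_mul_transpose [DecidableEq m] [DecidableEq n]
    {S T : Matrix (m ⊕ n) (m ⊕ n) ℝ} (hS : Sᵀ * S = 1) (hT : Tᵀ * T = 1) (σ : m → ℝ) (j : m) :
    σ j ≤ ‖S * fromBlocks (diagonal σ) 0 0 (0 : Matrix n n ℝ) * Tᵀ‖ := by
  have h := norm_le_l2_opNorm_mul_diagonal_mul_transpose hS hT (Sum.elim σ fun _ => 0) (.inl j)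
  rw [← fromBlocks_diagonal, diagonal_zero, Sum.elim_inl, Real.norm_eq_abs] at h
  exact (le_abs_self _).trans h

lemma l2_opNorm_inv_mul_mul_transpose [DecidableEq n] {S T : Matrix n n ℝ}
    (hS : S * Sᵀ = 1) (hT : T * Tᵀ = 1) (M : Matrix n n ℝ) :
    ‖(S * M * Tᵀ)⁻¹‖ = ‖M⁻¹‖ := by
  have hSo : Sᵀ ∈ orthogonalGroup n ℝ :=
    (mem_orthogonalGroup_iff' n ℝ).2 (by rwa [transpose_transpose])
  have hTo : T ∈ orthogonalGroup n ℝ := (mem_orthogonalGroup_iff n ℝ).2 hT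
  rw [mul_inv_rev, mul_inv_rev, inv_eq_left_inv hT, inv_eq_right_inv hS, ← Matrix.mul_assoc,
    CStarRing.norm_mul_mem_unitary _ hSo, CStarRing.norm_mem_unitary_mul _ hTo]

lemma mul_mul_transpose_add_mul_transpose {l R : Type*} [Fintype l] [DecidableEq l]
    [CommSemiring R] {S T : Matrix l l R} (hS : S * Sᵀ = 1) (hT : T * Tᵀ = 1) (M : Matrix l l R)
    (U V : Matrix l n R) :
    S * M * Tᵀ + U * Vᵀ = S * (M + (Sᵀ * U) * (Tᵀ * V)ᵀ) * Tᵀ := by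
  rw [transpose_mul, transpose_transpose, Matrix.mul_add, Matrix.add_mul]
  simp only [← Matrix.mul_assoc, hS]
  rw [Matrix.one_mul, Matrix.mul_assoc _ T, hT, Matrix.mul_one]

lemma fromBlocks_one_mul_fromBlocks_mul_transpose [DecidableEq m] [DecidableEq n] {R : Type*}
    [Semiring R] (E : Matrix m m R) (Ub Vb : Matrix m n R) (Ur Vr : Matrix n n R) :
    fromBlocks 1 Ub 0 Ur * fromBlocks E 0 0 1 * (fromBlocks 1 Vb 0 Vr)ᵀ =
      fromBlocks E 0 0 0 + fromRows Ub Ur * (fromRows Vb Vr)ᵀ := by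
  rw [fromBlocks_transpose, transpose_fromRows, fromRows_mul_fromCols, fromBlocks_multiply,
    fromBlocks_multiply, fromBlocks_add]
  simp

lemma l2_opNorm_inv_fromBlocks_le_of_transpose_mul_eq_fromRows [DecidableEq m] [DecidableEq n]
    {S : Matrix (m ⊕ n) (m ⊕ n) ℝ} (hS : S * Sᵀ = 1) {U : Matrix (m ⊕ n) n ℝ}
    {Ub : Matrix m n ℝ} {Ur : Matrix n n ℝ} (hU : Sᵀ * U = fromRows Ub Ur) (hUr : IsUnit Ur) :
    ‖(fromBlocks (1 : Matrix m m ℝ) Ub 0 Ur)⁻¹‖ ≤ (1 + ‖U‖) * max 1 ‖Ur⁻¹‖ := by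
  have hUb : ‖Ub‖ ≤ ‖U‖ :=
    calc ‖Ub‖ ≤ ‖Sᵀ * U‖ := hU ▸ l2_opNorm_le_l2_opNorm_fromRows_left Ub Ur
      _ ≤ ‖Sᵀ‖ * ‖U‖ := l2_opNorm_mul _ _
      _ ≤ ‖U‖ := mul_le_of_le_one_left (norm_nonneg _)
        (l2_opNorm_le_one_of_conjTranspose_mul_self_eq_one (by simpa using hS))
  exact (l2_opNorm_inv_fromBlocks_one_le hUr).trans (by gcongr)

end Matrix

theorem stmt15 {ρ r : ℕ} (hρ : 0 < ρ)
    (σ : Fin ρ → ℝ) (hσ : ∀ j, 0 < σ j)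
    (hmono : ∀ i j : Fin ρ, i ≤ j → σ j ≤ σ i)
    (S T : Matrix (Fin ρ ⊕ Fin r) (Fin ρ ⊕ Fin r) ℝ)
    (hS : Sᵀ * S = 1) (hS' : S * Sᵀ = 1) (hT : Tᵀ * T = 1) (hT' : T * Tᵀ = 1)
    (A Sig : Matrix (Fin ρ ⊕ Fin r) (Fin ρ ⊕ Fin r) ℝ)
    (hSig : Sig = Matrix.fromBlocks (Matrix.diagonal σ) 0 0 0)
    (hA : A = S * Sig * Tᵀ) (hA1 : ‖A‖ = 1)
    (U V : Matrix (Fin ρ ⊕ Fin r) (Fin r) ℝ)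
    (Ub : Matrix (Fin ρ) (Fin r) ℝ) (Ur : Matrix (Fin r) (Fin r) ℝ)
    (Vb : Matrix (Fin ρ) (Fin r) ℝ) (Vr : Matrix (Fin r) (Fin r) ℝ)
    (hU : Sᵀ * U = Matrix.fromRows Ub Ur) (hV : Tᵀ * V = Matrix.fromRows Vb Vr)
    (hUr : IsUnit Ur) (hVr : IsUnit Vr)
    (RU RV : Matrix (Fin ρ ⊕ Fin r) (Fin ρ ⊕ Fin r) ℝ)
    (hRU : RU = Matrix.fromBlocks 1 Ub 0 Ur) (hRV : RV = Matrix.fromBlocks 1 Vb 0 Vr)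
    (C : Matrix (Fin ρ ⊕ Fin r) (Fin ρ ⊕ Fin r) ℝ)
    (hC : C = A + U * Vᵀ) :
    IsUnit C ∧
    σ ⟨ρ - 1, by omega⟩ / ‖C⁻¹‖⁻¹ ≤ ‖RU⁻¹‖ * ‖RV⁻¹‖ ∧
    ‖RU⁻¹‖ * ‖RV⁻¹‖ ≤
      (1 + ‖U‖) * (1 + ‖V‖) * max 1 ‖Ur⁻¹‖ * max 1 ‖Vr⁻¹‖ := by
  set σρ := σ ⟨ρ - 1, by omega⟩
  have hσρ_pos : 0 < σρ := hσ _
  have hσρ_le : ∀ j, σρ ≤ σ j := fun j => hmono _ _ (Fin.mk_le_mk.2 (by omega))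
  have hσρ_le_one : σρ ≤ 1 := by
    simpa only [← hSig, ← hA, hA1] using
      le_l2_opNorm_mul_fromBlocks_diagonal_mul_transpose hS hT σ ⟨ρ - 1, by omega⟩
  set D := fromBlocks (diagonal σ) 0 0 (1 : Matrix (Fin r) (Fin r) ℝ) with hD
  have hCD : C = S * (RU * D * RVᵀ) * Tᵀ := by
    rw [hC, hA, mul_mul_transpose_add_mul_transpose hS' hT', hU, hV, hRU, hRV, hD,
      fromBlocks_one_mul_fromBlocks_mul_transpose, hSig]
  have hDinv : ‖D⁻¹‖ ≤ σρ⁻¹ := by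
    rw [hD, ← diagonal_one, fromBlocks_diagonal]
    exact l2_opNorm_inv_diagonal_le hσρ_pos (by rintro (j | j); exacts [hσρ_le j, hσρ_le_one])
  have hRUinv := hRU ▸ l2_opNorm_inv_fromBlocks_le_of_transpose_mul_eq_fromRows hS' hU hUr
  have hRVinv := hRV ▸ l2_opNorm_inv_fromBlocks_le_of_transpose_mul_eq_fromRows hT' hV hVr
  have hRUu : IsUnit RU := hRU ▸ isUnit_fromBlocks_zero₂₁.2 ⟨isUnit_one, hUr⟩
  have hRVu : IsUnit RV := hRV ▸ isUnit_fromBlocks_zero₂₁.2 ⟨isUnit_one, hVr⟩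
  have hDu : IsUnit D := isUnit_fromBlocks_zero₂₁.2
    ⟨isUnit_diagonal.2 (Pi.isUnit_iff.2 fun j => (hσ j).ne'.isUnit), isUnit_one⟩
  refine ⟨?_, ?_, ?_⟩
  · rw [hCD]
    exact ((IsUnit.of_mul_eq_one _ hS').mul ((hRUu.mul hDu).mul ((isUnit_transpose _).2 hRVu))).mul
      (IsUnit.of_mul_eq_one _ hT)
  · rw [div_inv_eq_mul, hCD, l2_opNorm_inv_mul_mul_transpose hS' hT']
    calc σρ * ‖(RU * D * RVᵀ)⁻¹‖ ≤ σρ * (‖RU⁻¹‖ * σρ⁻¹ * ‖RV⁻¹‖) :=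
          mul_le_mul_of_nonneg_left
            ((l2_opNorm_inv_mul_mul_transpose_le _ _ _).trans (by gcongr)) hσρ_pos.le
      _ = ‖RU⁻¹‖ * ‖RV⁻¹‖ := by field_simp [hσρ_pos.ne']
  · calc ‖RU⁻¹‖ * ‖RV⁻¹‖ ≤ (1 + ‖U‖) * max 1 ‖Ur⁻¹‖ * ((1 + ‖V‖) * max 1 ‖Vr⁻¹‖) := by
          gcongr
      _ = (1 + ‖U‖) * (1 + ‖V‖) * max 1 ‖Ur⁻¹‖ * max 1 ‖Vr⁻¹‖ := by ring
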